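/- arXiv:2102.08127 — 6 statements merged into one kernel-verified Lean document; each statement's English description precedes it below -/
import Mathlib

section
/- If f : ℝⁿ → ℝ is proper, lower semicontinuous, convex and pseudo-Lipschitz of order k (i.e. |f(x) - f(y)| ≤ L(1 + ‖x‖^{k-1} + ‖y‖^{k-1})‖x - y‖ for all x, y), then for any τ > 0 its Moreau envelope M_{τf}(x) = min_z { f(z) + (1/(2τ))‖x - z‖² } is also pseudo-Lipschitz of order k (with possibly a different constant). -/
/-!
Convexity upgrades the local Lipschitz bound of `f` on the unit ball around `y`, of size
`C (1 + ‖y‖ ^ m)` with `m = k - 1`, to a global minorant `f y - C (1 + ‖y‖ ^ m) ‖z - y‖`.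
Comparing it with the proximal inequality `f (p y) + ‖y - p y‖² / (2τ) ≤ f y` bounds the
proximal displacement `‖y - p y‖` by `2τ C (1 + ‖y‖ ^ m)`. Testing the minimisation defining
`M x` at `p y` then gives
`M x - M y ≤ (‖x - y‖ + 2 ‖y - p y‖) ‖x - y‖ / (2τ)`,
which is of the required form once `‖x - y‖ ≤ 2 (1 + ‖x‖ ^ m + ‖y‖ ^ m)`, i.e. for `m ≥ 1`.
For `m = 0`, `f` is Lipschitz, and testing `M x` at `p y + (x - y)` shows that `M` is
Lipschitz with the same constant.
-/

open Set

lemma le_one_add_pow {t : ℝ} (ht : 0 ≤ t) {m : ℕ} (hm : m ≠ 0) : t ≤ 1 + t ^ m := by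
  rcases le_total t 1 with h | h
  · linarith [pow_nonneg ht m]
  · linarith [le_self_pow₀ h hm]

section PseudoLipschitz

variable {E : Type*} [NormedAddCommGroup E]

/-- Pseudo-Lipschitz of order `m + 1`: the exponent `m` is the order minus one. -/
def PseudoLipschitzWith (L : ℝ) (m : ℕ) (f : E → ℝ) : Prop :=
  ∀ x y, |f x - f y| ≤ L * (1 + ‖x‖ ^ m + ‖y‖ ^ m) * ‖x - y‖

lemma pseudoLipschitzWith_of_sub_le {L : ℝ} {m : ℕ} {f : E → ℝ}
    (h : ∀ x y, f x - f y ≤ L * (1 + ‖x‖ ^ m + ‖y‖ ^ m) * ‖x - y‖) :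
    PseudoLipschitzWith L m f := by
  intro x y
  refine abs_sub_le_iff.2 ⟨h x y, ?_⟩
  calc f y - f x ≤ L * (1 + ‖y‖ ^ m + ‖x‖ ^ m) * ‖y - x‖ := h y x
    _ = L * (1 + ‖x‖ ^ m + ‖y‖ ^ m) * ‖x - y‖ := by rw [norm_sub_rev]; ring

lemma PseudoLipschitzWith.abs_sub_le_of_norm_sub_le_one {L : ℝ} {m : ℕ} {f : E → ℝ}
    (hf : PseudoLipschitzWith L m f) (hL : 0 ≤ L) {w y : E} (hw : ‖w - y‖ ≤ 1) :
    |f w - f y| ≤ L * (1 + 2 ^ m) * (1 + ‖y‖ ^ m) * ‖w - y‖ := by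
  have hwy : ‖w‖ ^ m ≤ 2 ^ m * (1 + ‖y‖ ^ m) :=
    calc ‖w‖ ^ m ≤ (‖y‖ + 1) ^ m := by
          gcongr
          linarith [norm_le_norm_add_norm_sub' w y, norm_sub_rev w y]
      _ ≤ 2 ^ (m - 1) * (‖y‖ ^ m + 1 ^ m) := add_pow_le (norm_nonneg y) zero_le_one m
      _ ≤ 2 ^ m * (1 + ‖y‖ ^ m) := by
          rw [one_pow, add_comm (‖y‖ ^ m)]
          gcongr
          · norm_num
          · omega
  calc |f w - f y| ≤ L * (1 + ‖w‖ ^ m + ‖y‖ ^ m) * ‖w - y‖ := hf w y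
    _ ≤ L * (1 + 2 ^ m) * (1 + ‖y‖ ^ m) * ‖w - y‖ := by
        rw [mul_assoc L (1 + 2 ^ m)]
        gcongr
        linarith

lemma ConvexOn.sub_mul_norm_sub_le [NormedSpace ℝ E] {f : E → ℝ} (hf : ConvexOn ℝ univ f)
    {y : E} {K : ℝ}
    (hK : ∀ w, ‖w - y‖ ≤ 1 → f y - K * ‖w - y‖ ≤ f w) (z : E) :
    f y - K * ‖z - y‖ ≤ f z := by
  set t := ‖z - y‖
  rcases le_or_gt t 1 with ht | ht
  · exact hK z ht
  have ht0 : 0 < t := by linarith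
  -- `w` is the point at distance one from `y` on the segment `[y, z]`
  set w : E := (1 - t⁻¹) • y + t⁻¹ • z
  have hwy : w - y = t⁻¹ • (z - y) := by module
  have hw_norm : ‖w - y‖ = 1 := by
    rw [hwy, norm_smul, norm_inv, Real.norm_of_nonneg ht0.le, inv_mul_cancel₀ ht0.ne']
  have hconv : f w ≤ (1 - t⁻¹) * f y + t⁻¹ * f z :=
    hf.2 (mem_univ y) (mem_univ z) (sub_nonneg.2 (inv_le_one_of_one_le₀ ht.le))
      (inv_nonneg.2 ht0.le) (sub_add_cancel 1 t⁻¹)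
  have hcone : f y - K ≤ f w := by simpa [hw_norm] using hK w hw_norm.le
  have hscaled : t * f w ≤ (t - 1) * f y + f z := by
    have := mul_le_mul_of_nonneg_left hconv ht0.le
    field_simp at this
    linarith
  nlinarith

lemma norm_sub_le_of_isMinOn_moreau {f : E → ℝ} {τ K : ℝ} (hτ : 0 < τ) (hK : 0 ≤ K)
    {y p : E}
    (hcone : ∀ z, f y - K * ‖z - y‖ ≤ f z)
    (hp : IsMinOn (fun z => f z + (1 / (2 * τ)) * ‖y - z‖ ^ 2) univ p) :
    ‖y - p‖ ≤ 2 * τ * K := by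
  have hprox : f p + (1 / (2 * τ)) * ‖y - p‖ ^ 2 ≤ f y := by simpa using hp (mem_univ y)
  have hlow : f y - K * ‖y - p‖ ≤ f p := by simpa [norm_sub_rev] using hcone p
  have hsq : ‖y - p‖ * ‖y - p‖ ≤ (2 * τ * K) * ‖y - p‖ := by
    have : (1 / (2 * τ)) * ‖y - p‖ ^ 2 ≤ K * ‖y - p‖ := by linarith
    rw [div_mul_eq_mul_div, one_mul, div_le_iff₀ (by positivity)] at this
    linarith
  rcases (norm_nonneg (y - p)).eq_or_lt with h | h
  · rw [← h]; positivity
  · exact le_of_mul_le_mul_right hsq h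

lemma sq_norm_sub_sub_sq_norm_sub_le (x y p : E) :
    ‖x - p‖ ^ 2 - ‖y - p‖ ^ 2 ≤ (‖x - y‖ + 2 * ‖y - p‖) * ‖x - y‖ := by
  have htri : ‖x - p‖ ≤ ‖x - y‖ + ‖y - p‖ := norm_sub_le_norm_sub_add_norm_sub x y p
  nlinarith [norm_nonneg (x - p), norm_nonneg (x - y), norm_nonneg (y - p)]

end PseudoLipschitz

section MoreauEnvelope

variable {E : Type*} [NormedAddCommGroup E]
  {f : E → ℝ} {τ : ℝ} {p : E → E} {M : E → ℝ}

lemma moreau_sub_le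
    (hp : ∀ x, IsMinOn (fun z => f z + (1 / (2 * τ)) * ‖x - z‖ ^ 2) univ (p x))
    (hM : ∀ x, M x = f (p x) + (1 / (2 * τ)) * ‖x - p x‖ ^ 2) (x y z : E) :
    M x - M y ≤ f z - f (p y) + (1 / (2 * τ)) * (‖x - z‖ ^ 2 - ‖y - p y‖ ^ 2) := by
  have := hp x (mem_univ z)
  simp only [mem_ofPred_eq] at this
  rw [hM x, hM y]
  linarith

lemma PseudoLipschitzWith.moreau_zero {L : ℝ} (hf : PseudoLipschitzWith L 0 f)
    (hp : ∀ x, IsMinOn (fun z => f z + (1 / (2 * τ)) * ‖x - z‖ ^ 2) univ (p x))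
    (hM : ∀ x, M x = f (p x) + (1 / (2 * τ)) * ‖x - p x‖ ^ 2) :
    PseudoLipschitzWith L 0 M := by
  refine pseudoLipschitzWith_of_sub_le fun x y => ?_
  have hshift := moreau_sub_le hp hM x y (p y + (x - y))
  rw [show x - (p y + (x - y)) = y - p y by abel, sub_self, mul_zero, add_zero] at hshift
  have hf' := le_of_abs_le (hf (p y + (x - y)) (p y))
  rw [add_sub_cancel_left, pow_zero, pow_zero] at hf'
  simpa using hshift.trans hf'

lemma PseudoLipschitzWith.norm_sub_prox_le [NormedSpace ℝ E] {L : ℝ} {m : ℕ}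
    (hf : PseudoLipschitzWith L m f)
    (hL : 0 ≤ L) (hf_conv : ConvexOn ℝ univ f) (hτ : 0 < τ)
    (hp : ∀ x, IsMinOn (fun z => f z + (1 / (2 * τ)) * ‖x - z‖ ^ 2) univ (p x)) (y : E) :
    ‖y - p y‖ ≤ 2 * τ * (L * (1 + 2 ^ m) * (1 + ‖y‖ ^ m)) := by
  refine norm_sub_le_of_isMinOn_moreau hτ (by positivity) (hf_conv.sub_mul_norm_sub_le ?_) (hp y)
  intro w hw
  linarith [neg_abs_le (f w - f y), hf.abs_sub_le_of_norm_sub_le_one hL hw]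

lemma PseudoLipschitzWith.moreau [NormedSpace ℝ E] {L : ℝ} {m : ℕ} (hm : m ≠ 0)
    (hf : PseudoLipschitzWith L m f)
    (hL : 0 ≤ L) (hf_conv : ConvexOn ℝ univ f) (hτ : 0 < τ)
    (hp : ∀ x, IsMinOn (fun z => f z + (1 / (2 * τ)) * ‖x - z‖ ^ 2) univ (p x))
    (hM : ∀ x, M x = f (p x) + (1 / (2 * τ)) * ‖x - p x‖ ^ 2) :
    PseudoLipschitzWith (1 / τ + 2 * (L * (1 + 2 ^ m))) m M := by
  refine pseudoLipschitzWith_of_sub_le fun x y => ?_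
  set C := L * (1 + 2 ^ m)
  set N := 1 + ‖x‖ ^ m + ‖y‖ ^ m
  have hx := pow_nonneg (norm_nonneg x) m
  have hy := pow_nonneg (norm_nonneg y) m
  have hprox : ‖y - p y‖ ≤ 2 * τ * C * N := by
    have := hf.norm_sub_prox_le hL hf_conv hτ hp y
    have hC : 0 ≤ C := by positivity
    calc ‖y - p y‖ ≤ 2 * τ * C * (1 + ‖y‖ ^ m) := by linarith
      _ ≤ 2 * τ * C * N := by gcongr; linarith
  have hxy : ‖x - y‖ ≤ 2 * N := by
    linarith [norm_sub_le x y, le_one_add_pow (norm_nonneg x) hm,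
      le_one_add_pow (norm_nonneg y) hm]
  calc M x - M y ≤ (1 / (2 * τ)) * (‖x - p y‖ ^ 2 - ‖y - p y‖ ^ 2) := by
        simpa using moreau_sub_le hp hM x y (p y)
    _ ≤ (1 / (2 * τ)) * ((‖x - y‖ + 2 * ‖y - p y‖) * ‖x - y‖) := by
        gcongr
        exact sq_norm_sub_sub_sq_norm_sub_le x y (p y)
    _ ≤ (1 / (2 * τ)) * ((2 * N + 2 * (2 * τ * C * N)) * ‖x - y‖) := by gcongr
    _ = (1 / τ + 2 * C) * N * ‖x - y‖ := by field_simp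

end MoreauEnvelope

theorem moreau_envelope_pseudoLipschitz_general {n : ℕ} (k : ℕ)
    (f : EuclideanSpace ℝ (Fin n) → ℝ)
    (hf_conv : ConvexOn ℝ Set.univ f)
    (L : ℝ) (hL : 0 < L)
    (hpl : ∀ x y, |f x - f y| ≤ L * (1 + ‖x‖ ^ (k - 1) + ‖y‖ ^ (k - 1)) * ‖x - y‖)
    (τ : ℝ) (hτ : 0 < τ)
    (p : EuclideanSpace ℝ (Fin n) → EuclideanSpace ℝ (Fin n))
    (M : EuclideanSpace ℝ (Fin n) → ℝ)
    (hp : ∀ x, IsMinOn (fun z => f z + (1 / (2 * τ)) * ‖x - z‖ ^ 2) Set.univ (p x))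
    (hM : ∀ x, M x = f (p x) + (1 / (2 * τ)) * ‖x - p x‖ ^ 2) :
    ∃ L' > 0, ∀ x y, |M x - M y| ≤ L' * (1 + ‖x‖ ^ (k - 1) + ‖y‖ ^ (k - 1)) * ‖x - y‖ := by
  have hf : PseudoLipschitzWith L (k - 1) f := hpl
  by_cases hm : k - 1 = 0
  · rw [hm] at hf ⊢
    exact ⟨L, hL, hf.moreau_zero hp hM⟩
  · exact ⟨_, by positivity, hf.moreau hm hL.le hf_conv hτ hp hM⟩

/-- The Moreau envelope of a proper, lsc, convex, pseudo-Lipschitz function of order `k`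
is pseudo-Lipschitz of order `k` (possibly with a different constant). -/
theorem moreau_envelope_pseudoLipschitz {n : ℕ} (k : ℕ) (hk : 1 ≤ k)
    (f : EuclideanSpace ℝ (Fin n) → ℝ)
    (hf_conv : ConvexOn ℝ Set.univ f) (hf_lsc : LowerSemicontinuous f)
    (L : ℝ) (hL : 0 < L)
    (hpl : ∀ x y, |f x - f y| ≤ L * (1 + ‖x‖ ^ (k - 1) + ‖y‖ ^ (k - 1)) * ‖x - y‖)
    (τ : ℝ) (hτ : 0 < τ)
    (p : EuclideanSpace ℝ (Fin n) → EuclideanSpace ℝ (Fin n))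
    (M : EuclideanSpace ℝ (Fin n) → ℝ)
    (hp : ∀ x, IsMinOn (fun z => f z + (1 / (2 * τ)) * ‖x - z‖ ^ 2) Set.univ (p x))
    (hM : ∀ x, M x = f (p x) + (1 / (2 * τ)) * ‖x - p x‖ ^ 2) :
    ∃ L' > 0, ∀ x y, |M x - M y| ≤ L' * (1 + ‖x‖ ^ (k - 1) + ‖y‖ ^ (k - 1)) * ‖x - y‖ :=
  moreau_envelope_pseudoLipschitz_general k f hf_conv L hL hpl τ hτ p M hp hM
end

section
/- Let f : ℝⁿ → ℝ be proper, convex and lower semicontinuous, τ > 0, and fix x ∈ ℝⁿ. Then the function h₁(θ) = xᵀ prox_{τf}(θx) is nondecreasing in θ ∈ ℝ. -/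
open RealInnerProductSpace

/-- θ ↦ xᵀ prox_{τf}(θ x) is nondecreasing. -/
theorem prox_inner_monotone {n : ℕ} (f : EuclideanSpace ℝ (Fin n) → ℝ)
    (hf_conv : ConvexOn ℝ Set.univ f) (hf_lsc : LowerSemicontinuous f)
    (τ : ℝ) (hτ : 0 < τ)
    (p : EuclideanSpace ℝ (Fin n) → EuclideanSpace ℝ (Fin n))
    (hp : ∀ x, IsMinOn (fun z => f z + (1 / (2 * τ)) * ‖x - z‖ ^ 2) Set.univ (p x))
    (x : EuclideanSpace ℝ (Fin n)) :
    Monotone (fun θ : ℝ => ⟪x, p (θ • x)⟫) := by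
  -- key: monotonicity of the prox operator
  have key : ∀ u v : EuclideanSpace ℝ (Fin n), 0 ≤ ⟪u - v, p u - p v⟫ := by
    intro u v
    have h1 := hp u (Set.mem_univ (p v))
    have h2 := hp v (Set.mem_univ (p u))
    simp only [Set.mem_univ] at h1 h2
    have e1 : ‖u - p u‖ ^ 2 = ‖u‖ ^ 2 - 2 * ⟪u, p u⟫ + ‖p u‖ ^ 2 := norm_sub_sq_real u (p u)
    have e2 : ‖u - p v‖ ^ 2 = ‖u‖ ^ 2 - 2 * ⟪u, p v⟫ + ‖p v‖ ^ 2 := norm_sub_sq_real u (p v)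
    have e3 : ‖v - p v‖ ^ 2 = ‖v‖ ^ 2 - 2 * ⟪v, p v⟫ + ‖p v‖ ^ 2 := norm_sub_sq_real v (p v)
    have e4 : ‖v - p u‖ ^ 2 = ‖v‖ ^ 2 - 2 * ⟪v, p u⟫ + ‖p u‖ ^ 2 := norm_sub_sq_real v (p u)
    have e5 : ⟪u - v, p u - p v⟫ = ⟪u, p u⟫ - ⟪u, p v⟫ - ⟪v, p u⟫ + ⟪v, p v⟫ := by
      rw [inner_sub_left, inner_sub_right, inner_sub_right]; ring
    have hτ' : (0:ℝ) < 1 / (2 * τ) := by positivity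
    rw [Set.mem_setOf_eq] at h1 h2
    rw [e1, e2] at h1
    rw [e3, e4] at h2
    nlinarith [h1, h2]
  intro a b hab
  rcases eq_or_lt_of_le hab with h | h
  · subst h; exact le_refl _
  · have hk := key (b • x) (a • x)
    have heq : (b - a) • x = b • x - a • x := sub_smul b a x
    rw [← heq, real_inner_smul_left] at hk
    have hba : 0 < b - a := sub_pos.mpr h
    simp only [inner_sub_right] at hk
    simp only
    nlinarith [hk]
end

section
/- Let f : ℝⁿ → ℝ be proper, convex and lower semicontinuous, and fix x ∈ ℝⁿ. Then the function h₂(τ) = (1/(2τ²))‖x - prox_{τf}(x)‖₂² is nonincreasing on τ ∈ (0, ∞). -/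
open scoped RealInnerProductSpace

/-- Variational inequality for a minimizer of `f z + (1/(2τ)) ‖x - z‖²` when `f` is convex. -/
lemma prox_var_ineq {n : ℕ} (f : EuclideanSpace ℝ (Fin n) → ℝ)
    (hf : ConvexOn ℝ Set.univ f) {τ : ℝ} (hτ : 0 < τ)
    {x u : EuclideanSpace ℝ (Fin n)}
    (hmin : IsMinOn (fun z => f z + (1 / (2 * τ)) * ‖x - z‖ ^ 2) Set.univ u)
    (z : EuclideanSpace ℝ (Fin n)) :
    f u + (1 / τ) * ⟪x - u, z - u⟫ ≤ f z := by
  set c : ℝ := 1 / (2 * τ) with hc_def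
  have hc : 0 < c := by positivity
  have hW : (0:ℝ) ≤ ‖z - u‖ ^ 2 := by positivity
  have step : ∀ l : ℝ, 0 < l → l ≤ 1 →
      f u + (1 / τ) * ⟪x - u, z - u⟫ ≤ f z + c * l * ‖z - u‖ ^ 2 := by
    intro l hl hl1
    have hconv := hf.2 (Set.mem_univ u) (Set.mem_univ z)
      (by linarith : (0:ℝ) ≤ 1 - l) hl.le (by ring)
    simp only [smul_eq_mul] at hconv
    have hm := hmin (Set.mem_univ ((1 - l) • u + l • z))
    simp only [Set.mem_setOf_eq] at hm
    have hx : x - ((1 - l) • u + l • z) = (x - u) - l • (z - u) := by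
      module
    have hnorm : ‖(x - u) - l • (z - u)‖ ^ 2
        = ‖x - u‖ ^ 2 - 2 * (l * ⟪x - u, z - u⟫) + l ^ 2 * ‖z - u‖ ^ 2 := by
      rw [norm_sub_sq_real, real_inner_smul_right, norm_smul, mul_pow, Real.norm_eq_abs,
        sq_abs]
    rw [hx, hnorm] at hm
    have h2c : (1 / τ : ℝ) = 2 * c := by
      rw [hc_def]; field_simp
    rw [h2c]
    have hlin : l * (f u + 2 * c * ⟪x - u, z - u⟫) ≤ l * (f z + c * l * ‖z - u‖ ^ 2) := by
      nlinarith [hm, hconv]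
    exact le_of_mul_le_mul_left hlin hl
  refine le_of_forall_pos_le_add ?_
  intro ε hε
  set W : ℝ := ‖z - u‖ ^ 2 with hW_def
  have hpos : (0:ℝ) < W + 1 := by positivity
  set l : ℝ := min 1 (ε * (2 * τ) / (W + 1)) with hl_def
  have hl0 : 0 < l := by
    apply lt_min one_pos
    positivity
  have hl1 : l ≤ 1 := min_le_left _ _
  have hl2 : l ≤ ε * (2 * τ) / (W + 1) := min_le_right _ _
  have h := step l hl0 hl1
  have hbound : c * l * W ≤ ε := by
    have h1 : c * l * W ≤ c * (ε * (2 * τ) / (W + 1)) * W := by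
      apply mul_le_mul_of_nonneg_right _ hW
      exact mul_le_mul_of_nonneg_left hl2 hc.le
    have h2 : c * (ε * (2 * τ) / (W + 1)) * W = ε * W / (W + 1) := by
      rw [hc_def]; field_simp
    have h3 : ε * W / (W + 1) ≤ ε := by
      rw [div_le_iff₀ hpos]; nlinarith
    linarith
  linarith

/-- Pure scalar step of the argument. -/
lemma prox_scalar_step (σ τ A B ip : ℝ) (hσ0 : 0 < σ) (hτ0 : 0 < τ) (hστ : σ ≤ τ)
    (hA : 0 ≤ A) (hB : 0 ≤ B) (hAB : A ≤ B) (hcs : ip ≤ A * B)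
    (hadd : (1/σ) * (A^2 - ip) + (1/τ) * (B^2 - ip) ≤ 0) :
    1 / (2 * τ ^ 2) * B ^ 2 ≤ 1 / (2 * σ ^ 2) * A ^ 2 := by
  have hs : (0:ℝ) < 1/σ := by positivity
  have ht : (0:ℝ) < 1/τ := by positivity
  have hts : (1/τ:ℝ) ≤ 1/σ := one_div_le_one_div_of_le hσ0 hστ
  have hsum : (0:ℝ) ≤ 1/σ + 1/τ := by positivity
  have hfac : (1/σ) * A^2 + (1/τ) * B^2 ≤ ((1/σ) + (1/τ)) * (A * B) := by
    nlinarith [mul_le_mul_of_nonneg_left hcs hsum]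
  have hkey : (1/τ) * B ≤ (1/σ) * A := by
    rcases eq_or_lt_of_le hAB with rfl | hlt
    · exact mul_le_mul_of_nonneg_right hts hA
    · nlinarith
  have hsq : (1/τ)^2 * B^2 ≤ (1/σ)^2 * A^2 := by
    nlinarith [mul_nonneg ht.le hB, mul_nonneg hs.le hA]
  have hσ2 : (1 / (2 * σ ^ 2) : ℝ) = (1/2) * (1/σ)^2 := by field_simp
  have hτ2 : (1 / (2 * τ ^ 2) : ℝ) = (1/2) * (1/τ)^2 := by field_simp
  rw [hσ2, hτ2]
  linarith

/-- τ ↦ (1/(2τ²)) ‖x - prox_{τf}(x)‖² is nonincreasing on (0, ∞). -/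
theorem prox_residual_scaled_antitone {n : ℕ} (f : EuclideanSpace ℝ (Fin n) → ℝ)
    (hf_conv : ConvexOn ℝ Set.univ f) (hf_lsc : LowerSemicontinuous f)
    (P : ℝ → EuclideanSpace ℝ (Fin n) → EuclideanSpace ℝ (Fin n))
    (hP : ∀ τ ∈ Set.Ioi (0 : ℝ), ∀ x,
      IsMinOn (fun z => f z + (1 / (2 * τ)) * ‖x - z‖ ^ 2) Set.univ (P τ x))
    (x : EuclideanSpace ℝ (Fin n)) :
    AntitoneOn (fun τ : ℝ => (1 / (2 * τ ^ 2)) * ‖x - P τ x‖ ^ 2) (Set.Ioi 0) := by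
  intro σ hσ τ hτ hστ
  simp only
  rcases eq_or_lt_of_le hστ with rfl | hlt
  · exact le_refl _
  have hσ0 : (0:ℝ) < σ := hσ
  have hτ0 : (0:ℝ) < τ := hτ
  set u := P σ x with hu
  set v := P τ x with hv
  set p := x - u with hp
  set q := x - v with hq
  -- variational inequalities
  have h1 : f u + (1 / σ) * ⟪p, v - u⟫ ≤ f v :=
    prox_var_ineq f hf_conv hσ0 (hP σ hσ x) v
  have h2 : f v + (1 / τ) * ⟪q, u - v⟫ ≤ f u :=
    prox_var_ineq f hf_conv hτ0 (hP τ hτ x) u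
  have hvu : v - u = p - q := by rw [hp, hq]; abel
  have huv : u - v = q - p := by rw [hp, hq]; abel
  rw [hvu] at h1; rw [huv] at h2
  have hexp1 : ⟪p, p - q⟫ = ‖p‖ ^ 2 - ⟪p, q⟫ := by
    rw [inner_sub_right, real_inner_self_eq_norm_sq]
  have hexp2 : ⟪q, q - p⟫ = ‖q‖ ^ 2 - ⟪p, q⟫ := by
    rw [inner_sub_right, real_inner_self_eq_norm_sq, real_inner_comm q p]
  rw [hexp1] at h1; rw [hexp2] at h2
  have hadd : (1 / σ) * (‖p‖ ^ 2 - ⟪p, q⟫) + (1 / τ) * (‖q‖ ^ 2 - ⟪p, q⟫) ≤ 0 := by linarith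
  -- plain minimality gives ‖p‖ ≤ ‖q‖
  have hm1 := (hP σ hσ x) (Set.mem_univ v)
  have hm2 := (hP τ hτ x) (Set.mem_univ u)
  simp only [Set.mem_setOf_eq] at hm1 hm2
  rw [← hv] at hm2
  have hPQ2 : ‖p‖ ^ 2 ≤ ‖q‖ ^ 2 := by
    have hs : (1 / (2 * τ) : ℝ) < 1 / (2 * σ) := by
      apply one_div_lt_one_div_of_lt <;> linarith
    nlinarith
  have hPQ : ‖p‖ ≤ ‖q‖ := by
    nlinarith [norm_nonneg p, norm_nonneg q]
  have hcs : ⟪p, q⟫ ≤ ‖p‖ * ‖q‖ := real_inner_le_norm p q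
  exact prox_scalar_step σ τ ‖p‖ ‖q‖ ⟪p, q⟫ hσ0 hτ0 hστ (norm_nonneg p) (norm_nonneg q)
    hPQ hcs hadd
end

section
/- Let f : ℝⁿ → ℝ be proper, convex and lower semicontinuous, and fix x ∈ ℝⁿ. Then the function h₃(τ) = ‖prox_{(1/τ)f}(x/τ)‖₂² is nonincreasing on τ ∈ (0, ∞). -/
open Set

/- Rescaling the prox objective turns `prox_{(1/τ)f}(x/τ)` into a minimizer of
`f z - ⟪x, z⟫ + (τ/2)‖z‖²`; raising the weight of a penalty can only lower the penalty
at the minimizer (add the two minimality inequalities). -/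

theorem IsMinOn.penalty_le_of_lt {α : Type*} {g q : α → ℝ} {s t : ℝ} {u v : α}
    (hu : IsMinOn (fun z => g z + s * q z) univ u)
    (hv : IsMinOn (fun z => g z + t * q z) univ v) (hst : s < t) :
    q v ≤ q u := by
  have hvu : g u + s * q u ≤ g v + s * q v := hu (mem_univ v)
  have huv : g v + t * q v ≤ g u + t * q u := hv (mem_univ u)
  have key : (t - s) * (q v - q u) ≤ 0 := by linarith
  exact sub_nonpos.1 (nonpos_of_mul_nonpos_right key (sub_pos.2 hst))

theorem IsMinOn.of_prox_inv {E : Type*} [NormedAddCommGroup E] [InnerProductSpace ℝ E]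
    {f : E → ℝ} {s : Set E} {x p : E} {τ : ℝ} (hτ : τ ≠ 0)
    (h : IsMinOn (fun z => f z + 1 / (2 * (1 / τ)) * ‖τ⁻¹ • x - z‖ ^ 2) s p) :
    IsMinOn (fun z => (f z - inner ℝ x z) + τ / 2 * ‖z‖ ^ 2) s p := by
  have expand : ∀ z : E, f z + 1 / (2 * (1 / τ)) * ‖τ⁻¹ • x - z‖ ^ 2 =
      (f z - inner ℝ x z) + τ / 2 * ‖z‖ ^ 2 + ‖x‖ ^ 2 / (2 * τ) := by
    intro z
    rw [norm_sub_sq_real, norm_smul, real_inner_smul_left, mul_pow, Real.norm_eq_abs, sq_abs]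
    field_simp
    ring
  rw [isMinOn_iff] at h ⊢
  intro z hz
  linarith [expand z, expand p, h z hz]

theorem prox_inv_param_antitone_general {n : ℕ} (f : EuclideanSpace ℝ (Fin n) → ℝ)
    (P : ℝ → EuclideanSpace ℝ (Fin n) → EuclideanSpace ℝ (Fin n))
    (hP : ∀ γ ∈ Set.Ioi (0 : ℝ), ∀ x,
      IsMinOn (fun z => f z + (1 / (2 * γ)) * ‖x - z‖ ^ 2) Set.univ (P γ x))
    (x : EuclideanSpace ℝ (Fin n)) :
    AntitoneOn (fun τ : ℝ => ‖P (1 / τ) (τ⁻¹ • x)‖ ^ 2) (Set.Ioi 0) := by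
  intro σ hσ τ hτ hστ
  have hmin : ∀ t ∈ Ioi (0 : ℝ), IsMinOn (fun z => (f z - inner ℝ x z) + t / 2 * ‖z‖ ^ 2)
      univ (P (1 / t) (t⁻¹ • x)) := fun t ht =>
    (hP _ (mem_Ioi.2 (one_div_pos.2 ht)) _).of_prox_inv ht.ne'
  rcases hστ.eq_or_lt with rfl | hlt
  · exact le_rfl
  · exact (hmin σ hσ).penalty_le_of_lt (hmin τ hτ) (by linarith)

/-- τ ↦ ‖prox_{(1/τ)f}(x/τ)‖² is nonincreasing on (0, ∞). -/
theorem prox_inv_param_antitone {n : ℕ} (f : EuclideanSpace ℝ (Fin n) → ℝ)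
    (hf_conv : ConvexOn ℝ Set.univ f) (hf_lsc : LowerSemicontinuous f)
    (P : ℝ → EuclideanSpace ℝ (Fin n) → EuclideanSpace ℝ (Fin n))
    (hP : ∀ γ ∈ Set.Ioi (0 : ℝ), ∀ x,
      IsMinOn (fun z => f z + (1 / (2 * γ)) * ‖x - z‖ ^ 2) Set.univ (P γ x))
    (x : EuclideanSpace ℝ (Fin n)) :
    AntitoneOn (fun τ : ℝ => ‖P (1 / τ) (τ⁻¹ • x)‖ ^ 2) (Set.Ioi 0) :=
  prox_inv_param_antitone_general f P hP x
end

section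
/- Let f : ℝⁿ → ℝ be proper, convex and lower semicontinuous, and fix x ∈ ℝⁿ. Then the function h₄(τ) = ‖x - prox_{τf}(x)‖₂² is nondecreasing on τ ∈ (0, ∞). -/
theorem le_of_isMinOn_add_mul_of_lt {α : Type*} {f g : α → ℝ} {s t : ℝ} {p q : α}
    (hp : IsMinOn (fun z => f z + s * g z) Set.univ p)
    (hq : IsMinOn (fun z => f z + t * g z) Set.univ q) (hst : s < t) :
    g q ≤ g p := by
  have hpq : f p + s * g p ≤ f q + s * g q := isMinOn_univ_iff.mp hp q
  have hqp : f q + t * g q ≤ f p + t * g p := isMinOn_univ_iff.mp hq p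
  have hmul : (t - s) * g q ≤ (t - s) * g p := by linarith
  exact le_of_mul_le_mul_left hmul (sub_pos.mpr hst)

theorem prox_residual_monotone_general {n : ℕ} (f : EuclideanSpace ℝ (Fin n) → ℝ)
    (P : ℝ → EuclideanSpace ℝ (Fin n) → EuclideanSpace ℝ (Fin n))
    (hP : ∀ τ ∈ Set.Ioi (0 : ℝ), ∀ x,
      IsMinOn (fun z => f z + (1 / (2 * τ)) * ‖x - z‖ ^ 2) Set.univ (P τ x))
    (x : EuclideanSpace ℝ (Fin n)) :
    MonotoneOn (fun τ : ℝ => ‖x - P τ x‖ ^ 2) (Set.Ioi 0) := by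
  intro a ha b hb hab
  rcases hab.eq_or_lt with rfl | hlt
  · exact le_rfl
  have ha' : (0 : ℝ) < a := ha
  have hweight : 1 / (2 * b) < 1 / (2 * a) :=
    one_div_lt_one_div_of_lt (by positivity) (by linarith)
  exact le_of_isMinOn_add_mul_of_lt (g := fun z => ‖x - z‖ ^ 2) (hP b hb x) (hP a ha x) hweight

/-- τ ↦ ‖x - prox_{τf}(x)‖² is nondecreasing on (0, ∞). -/
theorem prox_residual_monotone {n : ℕ} (f : EuclideanSpace ℝ (Fin n) → ℝ)
    (hf_conv : ConvexOn ℝ Set.univ f) (hf_lsc : LowerSemicontinuous f)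
    (P : ℝ → EuclideanSpace ℝ (Fin n) → EuclideanSpace ℝ (Fin n))
    (hP : ∀ τ ∈ Set.Ioi (0 : ℝ), ∀ x,
      IsMinOn (fun z => f z + (1 / (2 * τ)) * ‖x - z‖ ^ 2) Set.univ (P τ x))
    (x : EuclideanSpace ℝ (Fin n)) :
    MonotoneOn (fun τ : ℝ => ‖x - P τ x‖ ^ 2) (Set.Ioi 0) :=
  prox_residual_monotone_general f P hP x
end

section
/- Let f : ℝⁿ → ℝ be proper, lower semicontinuous and convex. For any x, x̃ ∈ dom(f) and any γ, γ̃ > 0, writing p = prox_{γf}(x) and p̃ = prox_{γ̃f}(x̃), one has ⟨p̃ - p, x̃/γ̃ - x/γ - (1/2)(1/γ̃ - 1/γ)(p̃ + p)⟩ ≥ (1/(2γ̃) + 1/(2γ))‖p̃ - p‖₂². -/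
open RealInnerProductSpace Filter Topology

lemma prox_subgrad {n : ℕ} (f : EuclideanSpace ℝ (Fin n) → ℝ)
    (hf_conv : ConvexOn ℝ Set.univ f)
    (x p : EuclideanSpace ℝ (Fin n)) (γ : ℝ) (hγ : 0 < γ)
    (hp : IsMinOn (fun z => f z + (1 / (2 * γ)) * ‖x - z‖ ^ 2) Set.univ p)
    (z : EuclideanSpace ℝ (Fin n)) :
    f p + (1 / γ) * ⟪x - p, z - p⟫ ≤ f z := by
  have key : ∀ t ∈ Set.Ioc (0:ℝ) 1,
      f p + (1/γ) * ⟪x - p, z - p⟫ - (t/(2*γ)) * ‖z - p‖^2 ≤ f z := by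
    intro t ht
    obtain ⟨ht0, ht1⟩ := ht
    have hmin := hp (Set.mem_univ (p + t • (z - p)))
    simp only at hmin
    have heq : p + t • (z - p) = (1 - t) • p + t • z := by module
    have hconv := hf_conv.2 (Set.mem_univ p) (Set.mem_univ z)
      (by linarith : (0:ℝ) ≤ 1 - t) ht0.le (by ring)
    rw [heq] at hmin
    have hmin' : f p + 1/(2*γ) * ‖x - p‖^2
        ≤ f ((1 - t) • p + t • z) + 1/(2*γ) * ‖x - ((1 - t) • p + t • z)‖^2 := hmin
    have hnorm : ‖x - ((1 - t) • p + t • z)‖^2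
        = ‖x - p‖^2 - 2 * t * ⟪x - p, z - p⟫ + t^2 * ‖z - p‖^2 := by
      have h1 : x - ((1 - t) • p + t • z) = (x - p) - t • (z - p) := by module
      rw [h1, norm_sub_sq_real, real_inner_smul_right, norm_smul]
      simp [abs_of_pos ht0]
      ring
    rw [hnorm] at hmin'
    rw [smul_eq_mul, smul_eq_mul] at hconv
    have h3 : t * (f p + 1/γ * ⟪x - p, z - p⟫ - t/(2*γ) * ‖z - p‖^2 - f z) ≤ 0 := by
      have hγ0 : γ ≠ 0 := ne_of_gt hγ
      generalize hI : ⟪x - p, z - p⟫ = I at *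
      generalize hN : ‖z - p‖^2 = N at *
      generalize hM : ‖x - p‖^2 = M at *
      generalize hA : f p = A at *
      generalize hB : f z = B at *
      generalize hC : f ((1 - t) • p + t • z) = C at *
      have e1 : t * (A + 1/γ * I - t/(2*γ) * N - B)
          = (A + 1/(2*γ) * M - (C + 1/(2*γ) * (M - 2*t*I + t^2*N)))
            + (C - ((1-t) * A + t * B)) := by
        field_simp
        ring
      rw [e1]
      linarith
    nlinarith [h3, ht0]
  have hlim : Tendsto (fun t : ℝ => f p + (1/γ) * ⟪x - p, z - p⟫ - (t/(2*γ)) * ‖z - p‖^2)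
      (𝓝[>] (0:ℝ)) (𝓝 (f p + (1/γ) * ⟪x - p, z - p⟫)) := by
    have hc : Tendsto (fun t : ℝ => f p + (1/γ) * ⟪x - p, z - p⟫ - (t/(2*γ)) * ‖z - p‖^2)
        (𝓝 (0:ℝ)) (𝓝 (f p + (1/γ) * ⟪x - p, z - p⟫ - ((0:ℝ)/(2*γ)) * ‖z - p‖^2)) :=
      (continuous_const.sub ((continuous_id.div_const (2*γ)).mul continuous_const)).tendsto 0
    simpa using hc.mono_left nhdsWithin_le_nhds
  refine le_of_tendsto hlim ?_
  filter_upwards [Ioc_mem_nhdsGT_of_mem (by norm_num : (0:ℝ) ∈ Set.Ico 0 1)] with t ht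
  exact key t ht

/-- A useful inequality on proximal operators at different points and parameters. -/
theorem prox_useful_inequality {n : ℕ} (f : EuclideanSpace ℝ (Fin n) → ℝ)
    (hf_conv : ConvexOn ℝ Set.univ f) (hf_lsc : LowerSemicontinuous f)
    (x x' : EuclideanSpace ℝ (Fin n)) (γ γ' : ℝ) (hγ : 0 < γ) (hγ' : 0 < γ')
    (p p' : EuclideanSpace ℝ (Fin n))
    (hp : IsMinOn (fun z => f z + (1 / (2 * γ)) * ‖x - z‖ ^ 2) Set.univ p)
    (hp' : IsMinOn (fun z => f z + (1 / (2 * γ')) * ‖x' - z‖ ^ 2) Set.univ p') :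
    (1 / (2 * γ') + 1 / (2 * γ)) * ‖p' - p‖ ^ 2 ≤
      ⟪p' - p, (1 / γ') • x' - (1 / γ) • x - ((1 / 2) * (1 / γ' - 1 / γ)) • (p' + p)⟫ := by
  have h1 := prox_subgrad f hf_conv x p γ hγ hp p'
  have h2 := prox_subgrad f hf_conv x' p' γ' hγ' hp' p
  have hsum : (1/γ) * ⟪x - p, p' - p⟫ + (1/γ') * ⟪x' - p', p - p'⟫ ≤ 0 := by linarith
  have key : ⟪p' - p, (1 / γ') • x' - (1 / γ) • x - ((1 / 2) * (1 / γ' - 1 / γ)) • (p' + p)⟫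
      = -((1/γ) * ⟪x - p, p' - p⟫ + (1/γ') * ⟪x' - p', p - p'⟫)
        + (1 / (2 * γ') + 1 / (2 * γ)) * ‖p' - p‖ ^ 2 := by
    rw [← real_inner_self_eq_norm_sq]
    simp only [inner_sub_left, inner_sub_right, inner_add_left, inner_add_right,
      real_inner_smul_left, real_inner_smul_right]
    rw [real_inner_comm p p', real_inner_comm x p', real_inner_comm x p,
      real_inner_comm x' p', real_inner_comm x' p]
    field_simp
    ring
  linarith
end
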